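/- Let S be a set of at least (r−1)(d+1)+1 points in ℝ^d. Then there exists a partition of S into r nonempty sets A₁,…,A_r and a graph G with vertex set S such that every point of S is adjacent in G to at least one point of each A_i, and the closed balls with diameters the edges of G have a common point. -/

import Mathlib

open Real

/-- The closed ball with diameter segment `ab` in `ℝ^d`. -/
def ballD {d : ℕ} (a b : EuclideanSpace ℝ (Fin d)) : Set (EuclideanSpace ℝ (Fin d)) :=
  Metric.closedBall (midpoint ℝ a b) (dist a b / 2)

open Finset
open scoped RealInnerProductSpace

set_option maxHeartbeats 1000000

lemma mem_ballD_of_inner {d : ℕ} {a b c : EuclideanSpace ℝ (Fin d)}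
    (h : ⟪c - a, c - b⟫ ≤ 0) : c ∈ ballD a b := by
  rw [ballD, Metric.mem_closedBall, dist_eq_norm, dist_eq_norm]
  have h1 : c - midpoint ℝ a b = (2:ℝ)⁻¹ • ((c - a) + (c - b)) := by
    rw [midpoint_eq_smul_add, invOf_eq_inv]; module
  have h2 : a - b = (c - b) - (c - a) := by abel
  rw [h1, h2, norm_smul]
  have h3 : ‖(c - a) + (c - b)‖ ≤ ‖(c - b) - (c - a)‖ := by
    have e1 := norm_add_sq_real (c - a) (c - b)
    have e2 := norm_sub_sq_real (c - b) (c - a)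
    have e3 : ⟪c - b, c - a⟫ = ⟪c - a, c - b⟫ := real_inner_comm _ _
    nlinarith [norm_nonneg ((c - a) + (c - b)), norm_nonneg ((c - b) - (c - a))]
  rw [norm_inv, Real.norm_ofNat]
  linarith

lemma euclid_sum_apply {ι κ : Type*} (s : Finset κ) (f : κ → EuclideanSpace ℝ ι) (q : ι) :
    (∑ k ∈ s, f k) q = ∑ k ∈ s, f k q :=
  by rw [WithLp.ofLp_sum]; exact Finset.sum_apply q s _

lemma euclid_smul_apply {ι : Type*} (c : ℝ) (f : EuclideanSpace ℝ ι) (q : ι) :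
    (c • f) q = c * f q := rfl


lemma exists_index_weights {E : Type*} [AddCommGroup E] [Module ℝ E] {κ : Type*} [Fintype κ]
    {x : κ → E} {y : E} (h : y ∈ convexHull ℝ (Set.range x)) :
    ∃ w : κ → ℝ, (∀ k, 0 ≤ w k) ∧ ∑ k, w k = 1 ∧ ∑ k, w k • x k = y := by
  classical
  rw [mem_convexHull_iff_exists_fintype] at h
  obtain ⟨ι, _, w, z, hw0, hw1, hz, hy⟩ := h
  choose φ hφ using fun i => hz i
  refine ⟨fun k => ∑ i ∈ univ.filter (fun i => φ i = k), w i, ?_, ?_, ?_⟩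
  · intro k; exact Finset.sum_nonneg fun i _ => hw0 i
  · simp only []
    rw [Finset.sum_fiberwise univ φ w, hw1]
  · rw [← hy]
    rw [← Finset.sum_fiberwise (univ : Finset ι) φ (fun i => w i • z i)]
    refine Finset.sum_congr rfl fun k _ => ?_
    rw [Finset.sum_smul]
    refine Finset.sum_congr rfl fun i hi => ?_
    rw [Finset.mem_filter] at hi
    rw [← hi.2, hφ]


lemma colorful_caratheodory {ι ι2 : Type} [Fintype ι] [Fintype ι2]
    (hcard : Fintype.card ι2 = Fintype.card ι + 1)
    (X : ι2 → Finset (EuclideanSpace ℝ ι))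
    (h0 : ∀ i, (0 : EuclideanSpace ℝ ι) ∈ convexHull ℝ (X i : Set (EuclideanSpace ℝ ι))) :
    ∃ x : ι2 → EuclideanSpace ℝ ι, (∀ i, x i ∈ X i) ∧
      (0 : EuclideanSpace ℝ ι) ∈ convexHull ℝ (Set.range x) := by
  classical
  have hne : ∀ i, (X i).Nonempty := by
    intro i
    rcases (X i).eq_empty_or_nonempty with h | h
    · exfalso; have := h0 i; rw [h] at this; simp at this
    · exact h
  have hι2 : Nonempty ι2 := Fintype.card_pos_iff.mp (by omega)
  let Sel := ∀ i : ι2, {z : EuclideanSpace ℝ ι // z ∈ X i}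
  have : Nonempty Sel := ⟨fun i => ⟨(hne i).choose, (hne i).choose_spec⟩⟩
  let f : Sel → ℝ := fun x => Metric.infDist 0 (convexHull ℝ (Set.range fun i => (x i : EuclideanSpace ℝ ι)))
  obtain ⟨x₀, hx₀min⟩ := Finite.exists_min f
  set v : ι2 → EuclideanSpace ℝ ι := fun i => (x₀ i : EuclideanSpace ℝ ι) with hv
  set K : Set (EuclideanSpace ℝ ι) := convexHull ℝ (Set.range v) with hK
  have hKconv : Convex ℝ K := convex_convexHull ℝ _
  have hKcpt : IsCompact K := (Set.finite_range v).isCompact_convexHull (𝕜 := ℝ)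
  have hKne : K.Nonempty := (Set.range_nonempty v).convexHull
  -- it suffices to prove 0 ∈ K
  suffices h0K : (0 : EuclideanSpace ℝ ι) ∈ K by
    exact ⟨v, fun i => (x₀ i).2, h0K⟩
  by_contra h0K
  obtain ⟨p, hpK, hp⟩ := hKcpt.exists_infDist_eq_dist hKne 0
  have hp0 : p ≠ 0 := fun h => h0K (h ▸ hpK)
  have hpnorm : 0 < ‖p‖ := norm_pos_iff.mpr hp0
  -- nearest point inequality
  have key : ∀ w ∈ K, ‖p‖ ^ 2 ≤ ⟪p, w⟫ := by
    have hiInf : ‖(0 : EuclideanSpace ℝ ι) - p‖ = ⨅ w : K, ‖(0 : EuclideanSpace ℝ ι) - w‖ := by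
      rw [← dist_eq_norm, ← hp, Metric.infDist_eq_iInf]
      simp only [dist_eq_norm]
    have := (norm_eq_iInf_iff_real_inner_le_zero hKconv hpK).mp hiInf
    intro w hw
    have h2 := this w hw
    have : ⟪(0 : EuclideanSpace ℝ ι) - p, w - p⟫ = ⟪p, p⟫ - ⟪p, w⟫ := by
      rw [zero_sub, inner_neg_left, inner_sub_right]; ring
    rw [this] at h2
    rw [← real_inner_self_eq_norm_sq]
    linarith
  -- weights on the finset t
  set t : Finset (EuclideanSpace ℝ ι) := Finset.univ.image v with ht
  have htK : (t : Set (EuclideanSpace ℝ ι)) = Set.range v := by simp [ht]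
  have hpt : p ∈ convexHull ℝ (t : Set (EuclideanSpace ℝ ι)) := by rw [htK]; exact hpK
  rw [Finset.mem_convexHull'] at hpt
  obtain ⟨w, hw0, hw1, hwp⟩ := hpt
  -- support of w is in the "touching" hyperplane
  have hsupp : ∀ y ∈ t, w y ≠ 0 → ⟪p, y⟫ = ‖p‖ ^ 2 := by
    have hsum0 : ∑ y ∈ t, w y * (⟪p, y⟫ - ‖p‖ ^ 2) = 0 := by
      have e1 : ∑ y ∈ t, w y * ⟪p, y⟫ = ‖p‖ ^ 2 := by
        have : ∑ y ∈ t, w y * ⟪p, y⟫ = ⟪p, ∑ y ∈ t, w y • y⟫ := by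
          rw [inner_sum]
          exact Finset.sum_congr rfl fun y _ => by rw [real_inner_smul_right]
        rw [this, hwp, real_inner_self_eq_norm_sq]
      have e2 : ∑ y ∈ t, w y * ‖p‖ ^ 2 = ‖p‖ ^ 2 := by
        rw [← Finset.sum_mul, hw1, one_mul]
      simp only [mul_sub]
      rw [Finset.sum_sub_distrib, e1, e2, sub_self]
    intro y hy hwy
    have hall := (Finset.sum_eq_zero_iff_of_nonneg (fun y hy => by
      have := key y (by rw [hK, ← htK]; exact subset_convexHull ℝ _ hy)
      have := hw0 y hy
      nlinarith)).mp hsum0 y hy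
    rcases mul_eq_zero.mp hall with h | h
    · exact absurd h hwy
    · linarith
  -- p is in the hull of the touching points
  set t' : Finset (EuclideanSpace ℝ ι) := t.filter (fun y => ⟪p, y⟫ = ‖p‖ ^ 2) with ht'
  have hpt' : p ∈ convexHull ℝ (t' : Set (EuclideanSpace ℝ ι)) := by
    rw [Finset.mem_convexHull']
    refine ⟨w, fun y hy => hw0 y (Finset.mem_of_mem_filter y hy), ?_, ?_⟩
    · rw [← hw1]; rw [ht']
      exact Finset.sum_filter_of_ne (fun y hy hne => hsupp y hy hne)
    · rw [← hwp, ht']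
      exact Finset.sum_filter_of_ne (fun y hy hne => hsupp y hy (by
        intro h; rw [h, zero_smul] at hne; exact hne rfl))
  -- Caratheodory
  rw [convexHull_eq_union] at hpt'
  simp only [Set.mem_iUnion] at hpt'
  obtain ⟨R, hRt', hRai, hpR⟩ := hpt'
  -- R is linearly independent
  have hRhyp : ∀ y ∈ R, ⟪p, y⟫ = ‖p‖ ^ 2 := by
    intro y hy
    have := hRt' hy
    rw [Finset.mem_coe, ht', Finset.mem_filter] at this
    exact this.2
  have hlin : LinearIndependent ℝ (fun y : R => (y : EuclideanSpace ℝ ι)) := by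
    rw [linearIndependent_iff']
    intro s g hsum
    have hg0 : ∑ i ∈ s, g i = 0 := by
      have : ⟪p, ∑ i ∈ s, g i • (i : EuclideanSpace ℝ ι)⟫ = 0 := by rw [hsum, inner_zero_right]
      rw [inner_sum] at this
      have e : ∀ i ∈ s, ⟪p, g i • (i : EuclideanSpace ℝ ι)⟫ = g i * ‖p‖ ^ 2 := by
        intro i _
        rw [real_inner_smul_right, hRhyp i.1 i.2]
      rw [Finset.sum_congr rfl e, ← Finset.sum_mul] at this
      rcases mul_eq_zero.mp this with h | h
      · exact h
      · nlinarith
    have hvsub : s.weightedVSub (fun y : R => (y : EuclideanSpace ℝ ι)) g = 0 := by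
      rw [Finset.weightedVSub_eq_linear_combination s hg0]
      exact hsum
    exact fun i hi => hRai s g hg0 hvsub i hi
  have hRcard : R.card ≤ Fintype.card ι := by
    have := hlin.fintype_card_le_finrank
    rwa [Fintype.card_coe, finrank_euclideanSpace] at this
  -- find a free color
  have hRv : ∀ y ∈ R, ∃ i, v i = y := by
    intro y hy
    have : y ∈ t := Finset.mem_of_mem_filter y (hRt' hy)
    rw [ht, Finset.mem_image] at this
    obtain ⟨i, _, hi⟩ := this
    exact ⟨i, hi⟩
  choose! ind hind using hRv
  have hI : (R.image ind).card < Fintype.card ι2 := by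
    calc (R.image ind).card ≤ R.card := Finset.card_image_le
    _ ≤ Fintype.card ι := hRcard
    _ < Fintype.card ι2 := by omega
  obtain ⟨i₀, hi₀⟩ : ∃ i₀, i₀ ∉ R.image ind := by
    by_contra hcon
    push_neg at hcon
    have : (univ : Finset ι2) ⊆ R.image ind := fun x _ => hcon x
    have := Finset.card_le_card this
    rw [Finset.card_univ] at this
    omega
  -- pick a point of X i₀ weakly on the other side of the hyperplane
  obtain ⟨z, hzX, hz⟩ : ∃ z ∈ X i₀, ⟪p, z⟫ ≤ 0 := by
    by_contra hcon
    push_neg at hcon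
    have hsub : (X i₀ : Set (EuclideanSpace ℝ ι)) ⊆ {w | 0 < ⟪p, w⟫} :=
      fun z hz => hcon z hz
    have hconv : Convex ℝ {w : EuclideanSpace ℝ ι | 0 < ⟪p, w⟫} :=
      convex_halfSpace_gt ⟨fun a b => inner_add_right p a b,
        fun c a => real_inner_smul_right p a c⟩ 0
    have h00 := convexHull_min hsub hconv (h0 i₀)
    simp only [Set.mem_setOf_eq, inner_zero_right] at h00
    exact lt_irrefl 0 h00
  -- the improved selection
  set x₁ : Sel := Function.update x₀ i₀ ⟨z, hzX⟩ with hx₁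
  set v₁ : ι2 → EuclideanSpace ℝ ι := fun i => (x₁ i : EuclideanSpace ℝ ι) with hv₁
  have hRv₁ : (R : Set (EuclideanSpace ℝ ι)) ⊆ Set.range v₁ := by
    intro y hy
    rw [Finset.mem_coe] at hy
    refine ⟨ind y, ?_⟩
    have hne' : ind y ≠ i₀ := by
      intro h; exact hi₀ (h ▸ Finset.mem_image_of_mem ind hy)
    simp only [hv₁, hx₁, Function.update_of_ne hne']
    exact hind y hy
  have hzv₁ : z ∈ Set.range v₁ := ⟨i₀, by simp [hv₁, hx₁]⟩
  set K₁ : Set (EuclideanSpace ℝ ι) := convexHull ℝ (Set.range v₁) with hK₁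
  have hpK₁ : p ∈ K₁ := convexHull_mono hRv₁ hpR
  have hzK₁ : z ∈ K₁ := subset_convexHull ℝ _ hzv₁
  have hzp : z ≠ p := by
    intro h
    rw [h, real_inner_self_eq_norm_sq] at hz
    nlinarith
  have hzpnorm : 0 < ‖z - p‖ := norm_pos_iff.mpr (sub_ne_zero.mpr hzp)
  set t₀ : ℝ := min 1 (‖p‖ ^ 2 / ‖z - p‖ ^ 2) with ht₀
  have ht₀pos : 0 < t₀ := lt_min one_pos (by positivity)
  have ht₀1 : t₀ ≤ 1 := min_le_left _ _
  have ht₀r : t₀ * ‖z - p‖ ^ 2 ≤ ‖p‖ ^ 2 := by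
    have h1 : t₀ ≤ ‖p‖ ^ 2 / ‖z - p‖ ^ 2 := min_le_right _ _
    have h2 : (0:ℝ) < ‖z - p‖ ^ 2 := by positivity
    calc t₀ * ‖z - p‖ ^ 2 ≤ (‖p‖ ^ 2 / ‖z - p‖ ^ 2) * ‖z - p‖ ^ 2 := by
          exact mul_le_mul_of_nonneg_right h1 (le_of_lt h2)
      _ = ‖p‖ ^ 2 := div_mul_cancel₀ _ (ne_of_gt h2)
  set mm : EuclideanSpace ℝ ι := (1 - t₀) • p + t₀ • z with hmm
  have hmK₁ : mm ∈ K₁ :=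
    (convex_convexHull ℝ _) hpK₁ hzK₁ (by linarith) (le_of_lt ht₀pos) (by ring)
  have hm2 : ‖mm‖ ^ 2 ≤ (1 - t₀) * ‖p‖ ^ 2 := by
    have hmeq : mm = p + t₀ • (z - p) := by rw [hmm]; module
    have hin : ⟪p, t₀ • (z - p)⟫ = t₀ * (⟪p, z⟫ - ‖p‖ ^ 2) := by
      rw [real_inner_smul_right, inner_sub_right, real_inner_self_eq_norm_sq]
    have hnn : ‖t₀ • (z - p)‖ ^ 2 = t₀ ^ 2 * ‖z - p‖ ^ 2 := by
      rw [norm_smul, Real.norm_eq_abs, mul_pow, sq_abs]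
    rw [hmeq, norm_add_sq_real, hin, hnn]
    nlinarith
  have hmlt : ‖mm‖ < ‖p‖ := by
    have expand : (1 - t₀) * ‖p‖ ^ 2 = ‖p‖ ^ 2 - t₀ * ‖p‖ ^ 2 := by ring
    have hpos : 0 < t₀ * ‖p‖ ^ 2 := mul_pos ht₀pos (by positivity)
    have hsq : ‖mm‖ ^ 2 < ‖p‖ ^ 2 := by linarith
    exact lt_of_pow_lt_pow_left₀ 2 (norm_nonneg p) hsq
  have hfx₁ : f x₁ ≤ ‖mm‖ := by
    have : Metric.infDist 0 K₁ ≤ dist 0 mm := Metric.infDist_le_dist_of_mem hmK₁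
    rw [dist_zero_left] at this
    exact this
  have hfx₀ : f x₀ = ‖p‖ := by
    have : f x₀ = Metric.infDist 0 K := rfl
    rw [this, hp, dist_zero_left]
  have := hx₀min x₁
  rw [hfx₀] at this
  linarith


/-- Append a final coordinate `1` to a point of `ℝ^d`. -/
def tvG {d : ℕ} (p : EuclideanSpace ℝ (Fin d)) : Fin (d + 1) → ℝ :=
  Fin.snoc (fun i => p i) 1

/-- The `m+1` vectors in `ℝ^m` summing to zero, any `m` of them independent. -/
def tvU (m : ℕ) (j : Fin (m + 1)) : Fin m → ℝ :=
  fun b => (if (j : ℕ) = (b : ℕ) then 1 else 0) - (if (j : ℕ) = m then 1 else 0)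

/-- Elementary tensor of two vectors. -/
def tvT {d m : ℕ} (w : Fin (d + 1) → ℝ) (v : Fin m → ℝ) :
    EuclideanSpace ℝ (Fin (d + 1) × Fin m) :=
  WithLp.toLp 2 (fun q : Fin (d + 1) × Fin m => w q.1 * v q.2)

lemma tvG_last {d : ℕ} (p : EuclideanSpace ℝ (Fin d)) : tvG p (Fin.last d) = 1 := by
  simp [tvG]

lemma tvG_castSucc {d : ℕ} (p : EuclideanSpace ℝ (Fin d)) (i : Fin d) :
    tvG p (Fin.castSucc i) = p i := by
  simp [tvG]

lemma ite_coe_eq₁ {m : ℕ} (b : Fin m) (j : Fin (m + 1)) :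
    ((j : ℕ) = (b : ℕ)) ↔ j = Fin.castSucc b := by
  constructor
  · intro h; exact Fin.ext (by simpa using h)
  · intro h; subst h; simp

lemma ite_coe_eq₂ {m : ℕ} (j : Fin (m + 1)) :
    ((j : ℕ) = m) ↔ j = Fin.last m := by
  constructor
  · intro h; exact Fin.ext (by simpa using h)
  · intro h; subst h; simp

lemma tvU_sum (m : ℕ) (b : Fin m) : ∑ j : Fin (m + 1), tvU m j b = 0 := by
  unfold tvU
  rw [Finset.sum_sub_distrib]
  have h1 : ∑ j : Fin (m + 1), (if (j : ℕ) = (b : ℕ) then (1:ℝ) else 0) = 1 := by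
    simp only [ite_coe_eq₁ b]
    rw [Finset.sum_ite_eq' Finset.univ (Fin.castSucc b) (fun _ => (1:ℝ))]
    simp
  have h2 : ∑ j : Fin (m + 1), (if (j : ℕ) = m then (1:ℝ) else 0) = 1 := by
    simp only [ite_coe_eq₂]
    rw [Finset.sum_ite_eq' Finset.univ (Fin.last m) (fun _ => (1:ℝ))]
    simp
  rw [h1, h2, sub_self]

lemma tvU_const {m : ℕ} (c : Fin (m + 1) → ℝ)
    (h : ∀ b : Fin m, ∑ j : Fin (m + 1), c j * tvU m j b = 0) :
    ∀ j, c j = c (Fin.last m) := by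
  intro j
  rcases Fin.eq_castSucc_or_eq_last j with ⟨b, rfl⟩ | rfl
  · have hb := h b
    unfold tvU at hb
    simp only [mul_sub] at hb
    rw [Finset.sum_sub_distrib] at hb
    have h1 : ∑ j : Fin (m + 1), c j * (if (j : ℕ) = (b : ℕ) then (1:ℝ) else 0)
        = c (Fin.castSucc b) := by
      simp only [ite_coe_eq₁ b, mul_ite, mul_one, mul_zero]
      rw [Finset.sum_ite_eq' Finset.univ (Fin.castSucc b) c]
      simp
    have h2 : ∑ j : Fin (m + 1), c j * (if (j : ℕ) = m then (1:ℝ) else 0)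
        = c (Fin.last m) := by
      simp only [ite_coe_eq₂, mul_ite, mul_one, mul_zero]
      rw [Finset.sum_ite_eq' Finset.univ (Fin.last m) c]
      simp
    rw [h1, h2] at hb
    linarith
  · rfl

lemma tverberg_point (d m : ℕ) (S : Finset (EuclideanSpace ℝ (Fin d)))
    (hcard : m * (d + 1) + 1 ≤ S.card) :
    ∃ (A : Fin (m + 1) → Finset (EuclideanSpace ℝ (Fin d)))
      (c : EuclideanSpace ℝ (Fin d)),
      (∀ i, A i ⊆ S) ∧ (∀ i, (A i).Nonempty) ∧
      (∀ i j, i ≠ j → Disjoint (A i) (A j)) ∧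
      ((S : Set (EuclideanSpace ℝ (Fin d))) = ⋃ i, (A i : Set (EuclideanSpace ℝ (Fin d)))) ∧
      (∀ i, c ∈ convexHull ℝ (A i : Set (EuclideanSpace ℝ (Fin d)))) := by
  classical
  set n : ℕ := (d + 1) * m with hn
  have hn1 : n + 1 ≤ S.card := by
    rw [hn, Nat.mul_comm]; exact hcard
  obtain ⟨t, htS, htcard⟩ := S.exists_subset_card_eq hn1
  set e := t.equivFinOfCardEq htcard with he
  set σ : Fin (n + 1) → EuclideanSpace ℝ (Fin d) := fun k => (e.symm k : EuclideanSpace ℝ (Fin d)) with hσ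
  have hσt : ∀ k, σ k ∈ t := fun k => (e.symm k).2
  have hσinj : Function.Injective σ := by
    intro a b hab
    have : e.symm a = e.symm b := Subtype.ext hab
    exact e.symm.injective this
  have hσsurj : ∀ y ∈ t, ∃ k, σ k = y := by
    intro y hy
    exact ⟨e ⟨y, hy⟩, by simp [hσ]⟩
  -- the color classes
  set X : Fin (n + 1) → Finset (EuclideanSpace ℝ (Fin (d + 1) × Fin m)) :=
    fun k => Finset.image (fun j : Fin (m + 1) => tvT (tvG (σ k)) (tvU m j)) Finset.univ with hX
  have h0 : ∀ k, (0 : EuclideanSpace ℝ (Fin (d + 1) × Fin m)) ∈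
      convexHull ℝ (X k : Set (EuclideanSpace ℝ (Fin (d + 1) × Fin m))) := by
    intro k
    refine mem_convexHull_of_exists_fintype (fun _ : Fin (m + 1) => 1 / ((m : ℝ) + 1))
      (fun j => tvT (tvG (σ k)) (tvU m j)) (fun j => by positivity) ?_ ?_ ?_
    · rw [Finset.sum_const, Finset.card_univ, Fintype.card_fin]
      rw [nsmul_eq_mul]
      push_cast
      field_simp
    · intro j
      exact Finset.mem_coe.mpr (Finset.mem_image_of_mem _ (Finset.mem_univ j))
    · ext q
      rw [euclid_sum_apply]
      have : ∀ j : Fin (m + 1),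
          ((1 / ((m : ℝ) + 1)) • tvT (tvG (σ k)) (tvU m j)) q
          = (1 / ((m : ℝ) + 1)) * tvG (σ k) q.1 * tvU m j q.2 := by
        intro j
        rw [euclid_smul_apply]
        show (1 / ((m : ℝ) + 1)) * (tvG (σ k) q.1 * tvU m j q.2) = _
        ring
      rw [Finset.sum_congr rfl (fun j _ => this j), ← Finset.mul_sum, tvU_sum, mul_zero]
      rfl
  have hcardeq : Fintype.card (Fin (n + 1)) = Fintype.card (Fin (d + 1) × Fin m) + 1 := by
    simp [hn, Fintype.card_prod]
  obtain ⟨x, hxX, hx0⟩ := colorful_caratheodory hcardeq X h0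
  -- extract colors
  have hcolor : ∀ k, ∃ j, tvT (tvG (σ k)) (tvU m j) = x k := by
    intro k
    have := hxX k
    rw [hX, Finset.mem_image] at this
    obtain ⟨j, _, hj⟩ := this
    exact ⟨j, hj⟩
  choose jj hjj using hcolor
  -- extract weights
  obtain ⟨lam, hlam0, hlam1, hlam⟩ := exists_index_weights hx0
  have hcoord : ∀ q : Fin (d + 1) × Fin m,
      ∑ k, lam k * (tvG (σ k) q.1 * tvU m (jj k) q.2) = 0 := by
    intro q
    have h : (∑ k, lam k • x k) q = (0 : EuclideanSpace ℝ (Fin (d + 1) × Fin m)) q := by rw [hlam]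
    rw [euclid_sum_apply] at h
    have h2 : ∀ k, (lam k • x k) q = lam k * (tvG (σ k) q.1 * tvU m (jj k) q.2) := by
      intro k
      rw [euclid_smul_apply, ← hjj k]
      rfl
    rw [Finset.sum_congr rfl (fun k _ => h2 k)] at h
    exact h
  -- the parts at index level
  set P : Fin (m + 1) → Finset (Fin (n + 1)) :=
    fun j => Finset.univ.filter (fun k => jj k = j) with hP
  set W : Fin (m + 1) → Fin (d + 1) → ℝ :=
    fun j a => ∑ k ∈ P j, lam k * tvG (σ k) a with hW
  have hWconst : ∀ (a : Fin (d + 1)) (j : Fin (m + 1)), W j a = W (Fin.last m) a := by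
    intro a
    refine tvU_const (fun j => W j a) ?_
    intro b
    have hfib : ∑ j : Fin (m + 1), ∑ k ∈ P j, lam k * tvG (σ k) a * tvU m (jj k) b
        = ∑ k, lam k * tvG (σ k) a * tvU m (jj k) b :=
      Finset.sum_fiberwise Finset.univ jj
        (fun k => lam k * tvG (σ k) a * tvU m (jj k) b)
    have hco := hcoord (a, b)
    have : ∑ j : Fin (m + 1), W j a * tvU m j b
        = ∑ k, lam k * tvG (σ k) a * tvU m (jj k) b := by
      rw [← hfib]
      refine Finset.sum_congr rfl fun j _ => ?_
      show (∑ k ∈ P j, lam k * tvG (σ k) a) * tvU m j b = _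
      rw [Finset.sum_mul]
      refine Finset.sum_congr rfl fun k hk => ?_
      simp only [hP, Finset.mem_filter] at hk
      rw [hk.2]
    rw [this]
    calc ∑ k, lam k * tvG (σ k) a * tvU m (jj k) b
        = ∑ k, lam k * (tvG (σ k) a * tvU m (jj k) b) := by
          exact Finset.sum_congr rfl fun k _ => by ring
      _ = 0 := hco
  -- each part has total weight 1/(m+1)
  have hw_eq : ∀ j, ∑ k ∈ P j, lam k = W j (Fin.last d) := by
    intro j
    rw [hW]
    exact Finset.sum_congr rfl fun k _ => by rw [tvG_last, mul_one]
  have hw_total : ∑ j : Fin (m + 1), ∑ k ∈ P j, lam k = 1 := by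
    rw [← hlam1]
    exact Finset.sum_fiberwise Finset.univ jj lam
  have hw_val : ∀ j, ∑ k ∈ P j, lam k = 1 / ((m : ℝ) + 1) := by
    have hconst : ∀ j, ∑ k ∈ P j, lam k = ∑ k ∈ P (Fin.last m), lam k := by
      intro j
      rw [hw_eq, hw_eq, hWconst (Fin.last d) j]
    have : ((m : ℝ) + 1) * ∑ k ∈ P (Fin.last m), lam k = 1 := by
      have h' : ∑ j : Fin (m + 1), ∑ k ∈ P j, lam k
          = ((m : ℝ) + 1) * ∑ k ∈ P (Fin.last m), lam k := by
        rw [Finset.sum_congr rfl (fun j _ => hconst j), Finset.sum_const,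
          Finset.card_univ, Fintype.card_fin, nsmul_eq_mul]
        push_cast
        ring
      rw [← h', hw_total]
    intro j
    rw [hconst j, eq_div_iff (by positivity : ((m : ℝ) + 1) ≠ 0), mul_comm]
    exact this
  have hm1pos : (0 : ℝ) < (m : ℝ) + 1 := by positivity
  have hPpos : ∀ j, 0 < ∑ k ∈ P j, lam k := by
    intro j; rw [hw_val]; positivity
  have hPne : ∀ j, (P j).Nonempty := by
    intro j
    rcases (P j).eq_empty_or_nonempty with h | h
    · exfalso; have := hPpos j; rw [h, Finset.sum_empty] at this; linarith
    · exact h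
  -- the Tverberg point
  set c : EuclideanSpace ℝ (Fin d) :=
    WithLp.toLp 2 (fun i => ((m : ℝ) + 1) * W (Fin.last m) (Fin.castSucc i)) with hc
  -- the parts
  set A : Fin (m + 1) → Finset (EuclideanSpace ℝ (Fin d)) :=
    fun j => (P j).image σ ∪ (if j = Fin.last m then S \ t else ∅) with hA
  have hAS : ∀ j, A j ⊆ S := by
    intro j y hy
    rw [hA, Finset.mem_union] at hy
    rcases hy with hy | hy
    · obtain ⟨k, _, rfl⟩ := Finset.mem_image.mp hy
      exact htS (hσt k)
    · split_ifs at hy with hj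
      · exact (Finset.mem_sdiff.mp hy).1
      · exact absurd hy (Finset.notMem_empty y)
  have hAimage : ∀ j, (P j).image σ ⊆ A j := by
    intro j
    rw [hA]; exact Finset.subset_union_left
  have hconv : ∀ j, c ∈ convexHull ℝ (A j : Set (EuclideanSpace ℝ (Fin d))) := by
    intro j
    have hmem := Finset.centerMass_mem_convexHull (P j) (fun k _ => hlam0 k) (hPpos j)
      (fun k hk => Finset.mem_coe.mpr (hAimage j (Finset.mem_image_of_mem σ hk)))
    have hcm : (P j).centerMass lam σ = c := by
      rw [Finset.centerMass, hw_val j]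
      ext i
      rw [euclid_smul_apply, euclid_sum_apply]
      have : ∀ k ∈ P j, (lam k • σ k) i = lam k * tvG (σ k) (Fin.castSucc i) := by
        intro k _
        rw [euclid_smul_apply, tvG_castSucc]
      rw [Finset.sum_congr rfl this]
      rw [hc]
      show (1 / ((m : ℝ) + 1))⁻¹ * (W j (Fin.castSucc i)) = ((m : ℝ) + 1) * W (Fin.last m) (Fin.castSucc i)
      rw [hWconst (Fin.castSucc i) j, one_div, inv_inv]
    rwa [hcm] at hmem
  refine ⟨A, c, hAS, ?_, ?_, ?_, hconv⟩
  · -- nonempty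
    intro j
    obtain ⟨k, hk⟩ := hPne j
    exact ⟨σ k, hAimage j (Finset.mem_image_of_mem σ hk)⟩
  · -- disjoint
    intro i j hij
    rw [Finset.disjoint_left]
    intro y hyi hyj
    rw [hA, Finset.mem_union] at hyi hyj
    have himt : ∀ j', y ∈ (P j').image σ → y ∈ t := by
      intro j' hy
      obtain ⟨k, _, rfl⟩ := Finset.mem_image.mp hy
      exact hσt k
    have hsd : ∀ j', y ∈ (if j' = Fin.last m then S \ t else ∅) → y ∉ t ∧ j' = Fin.last m := by
      intro j' hy
      split_ifs at hy with hj'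
      · exact ⟨(Finset.mem_sdiff.mp hy).2, hj'⟩
      · exact absurd hy (Finset.notMem_empty y)
    rcases hyi with hyi | hyi <;> rcases hyj with hyj | hyj
    · obtain ⟨k1, hk1, hk1y⟩ := Finset.mem_image.mp hyi
      obtain ⟨k2, hk2, hk2y⟩ := Finset.mem_image.mp hyj
      have : k1 = k2 := hσinj (by rw [hk1y, hk2y])
      subst this
      rw [hP, Finset.mem_filter] at hk1 hk2
      exact hij (hk1.2 ▸ hk2.2 ▸ rfl)
    · exact (hsd j hyj).1 (himt i hyi)
    · exact (hsd i hyi).1 (himt j hyj)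
    · exact hij ((hsd i hyi).2.trans (hsd j hyj).2.symm)
  · -- union
    apply Set.eq_of_subset_of_subset
    · intro p hp
      rw [Finset.mem_coe] at hp
      by_cases hpt : p ∈ t
      · obtain ⟨k, rfl⟩ := hσsurj p hpt
        refine Set.mem_iUnion.mpr ⟨jj k, ?_⟩
        rw [Finset.mem_coe]
        refine hAimage (jj k) (Finset.mem_image_of_mem σ ?_)
        rw [hP, Finset.mem_filter]
        exact ⟨Finset.mem_univ k, rfl⟩
      · refine Set.mem_iUnion.mpr ⟨Fin.last m, ?_⟩
        rw [Finset.mem_coe, hA, Finset.mem_union]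
        right
        rw [if_pos rfl, Finset.mem_sdiff]
        exact ⟨hp, hpt⟩
    · intro p hp
      obtain ⟨j, hj⟩ := Set.mem_iUnion.mp hp
      exact Finset.mem_coe.mpr (hAS j (Finset.mem_coe.mp hj))
/-- For at least `(r-1)(d+1)+1` points in `ℝ^d` there is a partition into `r`
nonempty parts and a Tverberg graph in which every point is adjacent to at least
one point of each part. -/
theorem tverberg_graph_with_partition
    (d r : ℕ) (hr : 1 ≤ r) (S : Finset (EuclideanSpace ℝ (Fin d)))
    (hcard : (r - 1) * (d + 1) + 1 ≤ S.card) :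
    ∃ (A : Fin r → Finset (EuclideanSpace ℝ (Fin d)))
      (Adj : EuclideanSpace ℝ (Fin d) → EuclideanSpace ℝ (Fin d) → Prop),
      (∀ i, A i ⊆ S) ∧
      (∀ i, (A i).Nonempty) ∧
      (∀ i j, i ≠ j → Disjoint (A i) (A j)) ∧
      ((S : Set (EuclideanSpace ℝ (Fin d))) = ⋃ i, (A i : Set (EuclideanSpace ℝ (Fin d)))) ∧
      Symmetric Adj ∧
      (∀ a b, Adj a b → a ∈ S ∧ b ∈ S) ∧
      (∀ q ∈ S, ∀ i, ∃ a ∈ A i, Adj q a) ∧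
      (∃ c, ∀ a b, Adj a b → c ∈ ballD a b) := by
  classical
  obtain ⟨m, rfl⟩ : ∃ m, r = m + 1 := ⟨r - 1, by omega⟩
  have hm : m * (d + 1) + 1 ≤ S.card := by simpa using hcard
  obtain ⟨A, c, hAS, hAne, hAdisj, hAunion, hconv⟩ := tverberg_point d m S hm
  refine ⟨A, fun a b => a ∈ S ∧ b ∈ S ∧ ⟪c - a, c - b⟫ ≤ 0, hAS, hAne, hAdisj, hAunion,
    ?_, ?_, ?_, ?_⟩
  · -- symmetric
    intro a b ⟨h1, h2, h3⟩
    exact ⟨h2, h1, by rwa [real_inner_comm]⟩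
  · -- edges in S
    exact fun a b h => ⟨h.1, h.2.1⟩
  · -- every point adjacent to each part
    intro q hq i
    by_contra hno
    push_neg at hno
    have hpos : ∀ a ∈ A i, 0 < ⟪c - q, c - a⟫ := by
      intro a ha
      by_contra hle
      push_neg at hle
      exact (not_lt.mpr hle) (hno a ha hq (hAS i ha))
    have hci := hconv i
    rw [Finset.mem_convexHull'] at hci
    obtain ⟨w, hw0, hw1, hwc⟩ := hci
    have hzero : ∑ y ∈ A i, w y * ⟪c - q, c - y⟫ = 0 := by
      have e1 : ∀ y ∈ A i, w y * ⟪c - q, c - y⟫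
          = w y * ⟪c - q, c⟫ - w y * ⟪c - q, y⟫ := by
        intro y _
        rw [inner_sub_right]; ring
      rw [Finset.sum_congr rfl e1, Finset.sum_sub_distrib, ← Finset.sum_mul, hw1, one_mul]
      have e2 : ∑ y ∈ A i, w y * ⟪c - q, y⟫ = ⟪c - q, c⟫ := by
        have : ∑ y ∈ A i, w y * ⟪c - q, y⟫ = ⟪c - q, ∑ y ∈ A i, w y • y⟫ := by
          rw [inner_sum]
          exact Finset.sum_congr rfl fun y _ => (real_inner_smul_right _ _ _).symm
        rw [this, hwc]
      rw [e2, sub_self]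
    have hsumpos : 0 < ∑ y ∈ A i, w y * ⟪c - q, c - y⟫ := by
      obtain ⟨y₀, hy₀, hwy₀⟩ := Finset.exists_ne_zero_of_sum_ne_zero (hw1 ▸ one_ne_zero)
      refine Finset.sum_pos' (fun y hy => mul_nonneg (hw0 y hy) (le_of_lt (hpos y hy))) ?_
      exact ⟨y₀, hy₀, mul_pos (lt_of_le_of_ne (hw0 y₀ hy₀) (Ne.symm hwy₀)) (hpos y₀ hy₀)⟩
    rw [hzero] at hsumpos
    exact lt_irrefl 0 hsumpos
  · -- common point of the diametral balls
    exact ⟨c, fun a b h => mem_ballD_of_inner h.2.2⟩
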